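/- If n = m ≥ 5, then there is no optimal (n,n)-graph: for every connected finite loopless multigraph G with n vertices and n edges and distinct terminals s,t, there exist a connected finite loopless multigraph H with n vertices and n edges, distinct terminals s',t' of H, and some p ∈ (0,1) with sRel(H,s',t';p) > sRel(G,s,t;p). -/

import Mathlib

/-- A finite loopless multigraph: a finite vertex type `V`, a finite edge type `E`,
and an endpoint map assigning to each edge an unordered pair of distinct vertices. -/
structure Multigraph where
  V : Type
  E : Type
  [fintV : Fintype V]
  [fintE : Fintype E]
  [decV : DecidableEq V]
  [decE : DecidableEq E]
  ends : E → Sym2 V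
  loopless : ∀ e, ¬ (ends e).IsDiag

attribute [instance] Multigraph.fintV Multigraph.fintE Multigraph.decV Multigraph.decE

namespace Multigraph

/-- The simple graph on `G.V` underlying the spanning subgraph of `G` with edge set `E'`. -/
def subgraph (G : Multigraph) (E' : Finset G.E) : SimpleGraph G.V where
  Adj u v := u ≠ v ∧ ∃ e ∈ E', G.ends e = s(u, v)
  symm := by
    refine ⟨?_⟩
    rintro u v ⟨huv, e, he, hends⟩
    exact ⟨huv.symm, e, he, hends.trans (Sym2.eq_swap)⟩
  loopless := by refine ⟨?_⟩; rintro u ⟨h, -⟩; exact h rfl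

/-- The spanning subgraph of `G` with edge set `E'` has exactly two connected components,
one containing `s` and the other containing `t`. -/
def SplitState (G : Multigraph) (s t : G.V) (E' : Finset G.E) : Prop :=
  ¬ (G.subgraph E').Reachable s t ∧
    ∀ v : G.V, (G.subgraph E').Reachable v s ∨ (G.subgraph E').Reachable v t

open scoped Classical in
/-- The split reliability of `G` with terminals `s` and `t`, at edge probability `p`. -/
noncomputable def sRel (G : Multigraph) (s t : G.V) (p : ℝ) : ℝ :=
  ∑ E' : Finset G.E, if G.SplitState s t E' then
    p ^ E'.card * (1 - p) ^ (Fintype.card G.E - E'.card) else 0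

open scoped Classical in
/-- `N_i(G,s,t)`: the number of edge subsets of cardinality `i` whose spanning subgraph has
exactly two connected components, one containing `s` and the other containing `t`. -/
noncomputable def Nst (G : Multigraph) (s t : G.V) (i : ℕ) : ℕ :=
  (Finset.univ.filter fun E' : Finset G.E => E'.card = i ∧ G.SplitState s t E').card

/-- A multigraph is connected when its underlying simple graph is. -/
def Connected (G : Multigraph) : Prop := (G.subgraph Finset.univ).Connected

open scoped Classical in
/-- The all-terminal reliability of `G` at edge probability `p`. -/
noncomputable def Rel (G : Multigraph) (p : ℝ) : ℝ :=
  ∑ E' : Finset G.E, if (G.subgraph E').Connected then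
    p ^ E'.card * (1 - p) ^ (Fintype.card G.E - E'.card) else 0

/-- `G` together with terminals `s ≠ t` is an optimal `(n,m)`-graph for split reliability. -/
def IsOptimal (n m : ℕ) (G : Multigraph) (s t : G.V) : Prop :=
  G.Connected ∧ Fintype.card G.V = n ∧ Fintype.card G.E = m ∧ s ≠ t ∧
    ∀ (H : Multigraph) (s' t' : H.V), H.Connected → Fintype.card H.V = n →
      Fintype.card H.E = m → s' ≠ t' → ∀ p : ℝ, 0 < p → p < 1 →
        H.sRel s' t' p ≤ G.sRel s t p

/-- An isomorphism of multigraphs taking terminals `s,t` of `G` to terminals `u,v` of `H`. -/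
def IsoTerm (G H : Multigraph) (s t : G.V) (u v : H.V) : Prop :=
  ∃ (φ : G.V ≃ H.V) (ψ : G.E ≃ H.E),
    (∀ e, H.ends (ψ e) = (G.ends e).map φ) ∧ φ s = u ∧ φ t = v

end Multigraph

namespace Multigraph

/-- `Gnm n m k`: the multigraph obtained from a path `v_0, v_1, …, v_{n-1}` (terminals
`s = v_0`, `t = v_{n-1}`) by replacing the path edge from `v_k` to `v_{k+1}` by a bundle of
`m - n + 2` parallel edges (so that the graph has `m` edges in total when `m ≥ n - 1`). -/
def Gnm (n m k : ℕ) (hk : k < n - 1) : Multigraph where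
  V := Fin n
  E := Fin m
  ends e :=
    if h : e.val < n - 1 then
      s((⟨e.val, by omega⟩ : Fin n), (⟨e.val + 1, by omega⟩ : Fin n))
    else
      s((⟨k, by omega⟩ : Fin n), (⟨k + 1, by omega⟩ : Fin n))
  loopless e := by
    by_cases h : e.val < n - 1 <;>
      simp [h, Sym2.mk_isDiag_iff, Fin.ext_iff]

/-- The cycle on `n ≥ 2` vertices. -/
def cycleGraph (n : ℕ) (hn : 2 ≤ n) : Multigraph where
  V := Fin n
  E := Fin n
  ends e := s(e, (⟨(e.val + 1) % n, Nat.mod_lt _ (by omega)⟩ : Fin n))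
  loopless e := by
    simp only [Sym2.mk_isDiag_iff, Fin.ext_iff, Fin.val_mk]
    intro hc
    rcases Nat.lt_or_ge (e.val + 1) n with h' | h'
    · rw [Nat.mod_eq_of_lt h'] at hc; omega
    · have he : e.val + 1 = n := by have := e.isLt; omega
      rw [he, Nat.mod_self] at hc
      omega

/-- The multigraph obtained from `G` by adjoining a new vertex (`none`) joined by a single
new edge to the vertex `u` of `G`. -/
def addPendant (G : Multigraph) (u : G.V) : Multigraph where
  V := Option G.V
  E := Option G.E
  ends e := e.elim s(some u, none) (fun e' => (G.ends e').map some)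
  loopless e := by
    cases e with
    | none => simp [Sym2.mk_isDiag_iff]
    | some e' =>
        show ¬ ((G.ends e').map some).IsDiag
        rw [Sym2.isDiag_map (Option.some_injective _)]
        exact G.loopless e'

/-- The disjoint union of two multigraphs. -/
def disjSum (A B : Multigraph) : Multigraph where
  V := A.V ⊕ B.V
  E := A.E ⊕ B.E
  ends := Sum.elim (fun e => (A.ends e).map Sum.inl) (fun e => (B.ends e).map Sum.inr)
  loopless e := by
    cases e with
    | inl e =>
        show ¬ ((A.ends e).map Sum.inl).IsDiag
        rw [Sym2.isDiag_map Sum.inl_injective]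
        exact A.loopless e
    | inr e =>
        show ¬ ((B.ends e).map Sum.inr).IsDiag
        rw [Sym2.isDiag_map Sum.inr_injective]
        exact B.loopless e

/-- The multigraph on three vertices `0, 1, 2` with a bundle of `a` parallel edges between
`0` and `1` and a bundle of `b` parallel edges between `1` and `2`. -/
def doubleBundle (a b : ℕ) : Multigraph where
  V := Fin 3
  E := Fin (a + b)
  ends e := if e.val < a then s((0 : Fin 3), (1 : Fin 3)) else s((1 : Fin 3), (2 : Fin 3))
  loopless e := by
    by_cases h : e.val < a <;> simp [h, Sym2.mk_isDiag_iff]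

/-- The multigraph on three vertices `0, 1, 2` with bundles of `a`, `b`, `c` parallel edges
between `0,1`, between `1,2`, and between `2,0` respectively. -/
def tripleBundle (a b c : ℕ) : Multigraph where
  V := Fin 3
  E := Fin (a + b + c)
  ends e :=
    if e.val < a then s((0 : Fin 3), (1 : Fin 3))
    else if e.val < a + b then s((1 : Fin 3), (2 : Fin 3))
    else s((2 : Fin 3), (0 : Fin 3))
  loopless e := by
    by_cases h : e.val < a
    · simp [h, Sym2.mk_isDiag_iff]
    · by_cases h' : e.val < a + b <;> simp [h, h', Sym2.mk_isDiag_iff]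

/-- The multigraph obtained from a path `v_0, …, v_{n-1}` by replacing the path edge at
position `k₁` by a bundle of `2` parallel edges and the path edge at position `k₂` by a
bundle of `m - n + 1` parallel edges (for `m ≥ n`, `k₁ ≠ k₂`, the graph has `m` edges). -/
def Gnm2 (n m k₁ k₂ : ℕ) (hk₁ : k₁ < n - 1) (hk₂ : k₂ < n - 1) : Multigraph where
  V := Fin n
  E := Fin m
  ends e :=
    if h : e.val < n - 1 then
      s((⟨e.val, by omega⟩ : Fin n), (⟨e.val + 1, by omega⟩ : Fin n))
    else if e.val = n - 1 then
      s((⟨k₁, by omega⟩ : Fin n), (⟨k₁ + 1, by omega⟩ : Fin n))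
    else
      s((⟨k₂, by omega⟩ : Fin n), (⟨k₂ + 1, by omega⟩ : Fin n))
  loopless e := by
    by_cases h : e.val < n - 1
    · simp [h, Sym2.mk_isDiag_iff, Fin.ext_iff]
    · by_cases h' : e.val = n - 1 <;> simp [h, h', Sym2.mk_isDiag_iff, Fin.ext_iff]

/-- The simple graph on `n ≥ 4` vertices consisting of a path `s = v_0, …, v_{n-3} = t` of
length `n - 3` together with two further vertices `v_{n-2}, v_{n-1}` forming a triangle
with `t`. It has `n` vertices and `n` edges. -/
def triGraph (n : ℕ) (hn : 4 ≤ n) : Multigraph where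
  V := Fin n
  E := Fin n
  ends e :=
    if h : e.val < n - 3 then
      s((⟨e.val, by omega⟩ : Fin n), (⟨e.val + 1, by omega⟩ : Fin n))
    else if e.val = n - 3 then
      s((⟨n - 3, by omega⟩ : Fin n), (⟨n - 2, by omega⟩ : Fin n))
    else if e.val = n - 2 then
      s((⟨n - 2, by omega⟩ : Fin n), (⟨n - 1, by omega⟩ : Fin n))
    else
      s((⟨n - 1, by omega⟩ : Fin n), (⟨n - 3, by omega⟩ : Fin n))
  loopless e := by
    by_cases h : e.val < n - 3
    · simp [h, Sym2.mk_isDiag_iff, Fin.ext_iff]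
    · by_cases h' : e.val = n - 3
      · simp only [dif_neg h, if_pos h', Sym2.mk_isDiag_iff, Fin.mk.injEq]; omega
      · by_cases h'' : e.val = n - 2
        · simp only [dif_neg h, if_neg h', if_pos h'', Sym2.mk_isDiag_iff, Fin.mk.injEq]; omega
        · simp only [dif_neg h, if_neg h', if_neg h'', Sym2.mk_isDiag_iff, Fin.mk.injEq]; omega

end Multigraph

/-!
For a connected graph with `n` vertices and `n` edges, a split state keeps `n - 2` or `n - 1`
edges, so `sRel = N_{n-2} p^{n-2} (1-p)^2 + N_{n-1} p^{n-1} (1-p)`. Between two such graphs, the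
one with the larger `N_{n-2}` wins for `p` near `0`, and the one with the larger `N_{n-1}` wins for
`p` near `1`.

If `N_{n-1}(G) < n - 2`, the path with a doubled first edge has `N_{n-1} ≥ n - 2` and wins near
`1`. Otherwise at least `n - 2` single edges split `G`. Removing two of them never gives a split
state, so `N_{n-2}(G) ≤ C(n,2) - C(n-2,2) = 2n - 3`. The triangle with a pendant path has
`N_{n-2} ≥ 3n - 7 > 2n - 3` and wins near `0`.
-/

lemma exists_pos_affine_of_pos_right {α β : ℝ} (hβ : 0 < β) :
    ∃ p : ℝ, 0 < p ∧ p < 1 ∧ 0 < α * (1 - p) + β * p := by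
  have hlim : Filter.Tendsto (fun p : ℝ => α * (1 - p) + β * p) (nhdsWithin 1 (Set.Iio 1))
      (nhds β) := by
    have : Continuous fun p : ℝ => α * (1 - p) + β * p := by fun_prop
    simpa using (this.tendsto 1).mono_left nhdsWithin_le_nhds
  obtain ⟨p, ⟨hp0, hp1⟩, hp⟩ :=
    (Filter.Eventually.and (Ioo_mem_nhdsLT zero_lt_one) (hlim.eventually_const_lt hβ)).exists
  exact ⟨p, hp0, hp1, hp⟩

lemma exists_pos_affine {α β : ℝ} (h : 0 < α ∨ 0 < β) :
    ∃ p : ℝ, 0 < p ∧ p < 1 ∧ 0 < α * (1 - p) + β * p := by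
  rcases h with hα | hβ
  · obtain ⟨p, hp0, hp1, hp⟩ := exists_pos_affine_of_pos_right (α := β) hα
    exact ⟨1 - p, by linarith, by linarith, by linarith⟩
  · exact exists_pos_affine_of_pos_right hβ

lemma exists_lt_of_lt_or_lt {a b a' b' : ℝ} {n : ℕ} (hn : 2 ≤ n) (h : a < a' ∨ b < b') :
    ∃ p : ℝ, 0 < p ∧ p < 1 ∧
      a * (p ^ (n - 2) * (1 - p) ^ 2) + b * (p ^ (n - 1) * (1 - p)) <
        a' * (p ^ (n - 2) * (1 - p) ^ 2) + b' * (p ^ (n - 1) * (1 - p)) := by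
  obtain ⟨p, hp0, hp1, hp⟩ := exists_pos_affine (α := a' - a) (β := b' - b)
    (h.imp sub_pos.mpr sub_pos.mpr)
  refine ⟨p, hp0, hp1, sub_pos.mp ?_⟩
  have hpos : 0 < p ^ (n - 2) * (1 - p) := mul_pos (pow_pos hp0 _) (sub_pos.mpr hp1)
  have hfactor : a' * (p ^ (n - 2) * (1 - p) ^ 2) + b' * (p ^ (n - 1) * (1 - p)) -
      (a * (p ^ (n - 2) * (1 - p) ^ 2) + b * (p ^ (n - 1) * (1 - p))) =
      p ^ (n - 2) * (1 - p) * ((a' - a) * (1 - p) + (b' - b) * p) := by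
    rw [show n - 1 = n - 2 + 1 by omega]
    ring
  exact hfactor ▸ mul_pos hpos hp

namespace SimpleGraph

theorem Reachable.iff_of_forall_adj {V : Type*} {A : SimpleGraph V} {P : V → Prop}
    (hP : ∀ u v, A.Adj u v → (P u ↔ P v)) {a b : V} (h : A.Reachable a b) : P a ↔ P b := by
  obtain ⟨w⟩ := h
  induction w with
  | nil => rfl
  | cons hadj _ ih => exact (hP _ _ hadj).trans ih

theorem reachable_of_forall_adj_succ {n : ℕ} {A : SimpleGraph (Fin n)} {u v : Fin n}
    (huv : u ≤ v) (h : ∀ i j : Fin n, u ≤ i → j ≤ v → i.val + 1 = j.val → A.Adj i j) :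
    A.Reachable u v := by
  obtain ⟨k, hk⟩ := Nat.exists_eq_add_of_le (Fin.le_iff_val_le_val.mp huv)
  induction k generalizing v with
  | zero => exact Fin.ext hk.symm ▸ Reachable.refl u
  | succ k ih =>
    obtain ⟨w, hw⟩ : ∃ w : Fin n, w.val = u.val + k := ⟨⟨u.val + k, by omega⟩, rfl⟩
    exact (ih (by omega) (fun i j hi hj => h i j hi (by omega)) hw).trans
      (h w v (by omega) le_rfl (by omega)).reachable

theorem connected_of_forall_adj_succ {n : ℕ} [NeZero n] {A : SimpleGraph (Fin n)}
    (h : ∀ i j : Fin n, i.val + 1 = j.val → A.Adj i j) : A.Connected :=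
  ⟨(pathGraph_preconnected n).mono fun u v huv =>
    (pathGraph_adj.mp huv).elim (h u v) fun hvu => (h v u hvu).symm⟩

end SimpleGraph

namespace Multigraph

variable {G : Multigraph} {s t : G.V} {E' : Finset G.E}

lemma subgraph_mono {E₁ E₂ : Finset G.E} (h : E₁ ⊆ E₂) : G.subgraph E₁ ≤ G.subgraph E₂ :=
  fun _ _ ⟨huv, e, he, hends⟩ => ⟨huv, e, h he, hends⟩

lemma subgraph_adj_of_mem {e : G.E} {u v : G.V} (he : e ∈ E') (h : G.ends e = s(u, v)) :
    (G.subgraph E').Adj u v :=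
  ⟨fun huv => G.loopless e (by rw [h, huv]; exact Sym2.mk_isDiag_iff.mpr rfl), e, he, h⟩

lemma splitState_of_cut (P : G.V → Prop)
    (hP : ∀ e ∈ E', ∀ u v, G.ends e = s(u, v) → (P u ↔ P v)) (hs : P s) (ht : ¬ P t)
    (hcover : ∀ v, (G.subgraph E').Reachable v s ∨ (G.subgraph E').Reachable v t) :
    G.SplitState s t E' := by
  refine ⟨fun h => ht ((h.iff_of_forall_adj fun u v huv => ?_).mp hs), hcover⟩
  obtain ⟨-, e, he, hends⟩ := huv
  exact hP e he u v hends

-- A split state plus the edge `st` is connected, so it has at least `|V| - 2` distinct edges.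
lemma SplitState.card_le (h : G.SplitState s t E') : Fintype.card G.V ≤ E'.card + 2 := by
  set A := G.subgraph E'
  have hst : s ≠ t := fun hst => h.1 (hst ▸ SimpleGraph.Reachable.refl s)
  have hts : (A ⊔ SimpleGraph.edge s t).Reachable t s :=
    ((SimpleGraph.sup_adj ..).mpr
      (.inr ((SimpleGraph.edge_adj ..).mpr ⟨.inr ⟨rfl, rfl⟩, hst.symm⟩))).reachable
  have hreach : ∀ v, (A ⊔ SimpleGraph.edge s t).Reachable v s := fun v =>
    (h.2 v).elim (·.mono le_sup_left) fun hv => (hv.mono le_sup_left).trans hts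
  have : Nonempty G.V := ⟨s⟩
  have hconn : (A ⊔ SimpleGraph.edge s t).Connected :=
    ⟨fun u v => (hreach u).trans (hreach v).symm⟩
  have hedges : A.edgeSet ⊆ G.ends '' E' := by
    intro z hz
    induction z using Sym2.ind with
    | _ u v =>
      obtain ⟨-, e, he, hends⟩ := hz
      exact ⟨e, he, hends⟩
  have := hconn.card_vert_le_card_edgeSet_add_one
  rw [Nat.card_eq_fintype_card, Nat.card_coe_set_eq, SimpleGraph.edgeSet_sup,
    SimpleGraph.edgeSet_edge_of_ne hst] at this
  have h1 := Set.ncard_union_le A.edgeSet {s(s, t)}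
  have h2 := Set.ncard_le_ncard hedges (Set.toFinite _)
  have h3 := Set.ncard_image_le (f := G.ends) (Finset.finite_toSet E')
  rw [Set.ncard_singleton] at h1
  rw [Set.ncard_coe_finset] at h3
  omega

lemma SplitState.ne_univ (hG : G.Connected) (h : G.SplitState s t E') : E' ≠ Finset.univ := by
  rintro rfl
  exact h.1 (hG.preconnected s t)

lemma SplitState.reachable_iff_of_adj {A A' : Finset G.E} (hA : G.SplitState s t A)
    (hAA' : A ⊆ A') (hA' : ¬ (G.subgraph A').Reachable s t) {u v : G.V}
    (huv : (G.subgraph A').Adj u v) :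
    (G.subgraph A).Reachable u s ↔ (G.subgraph A).Reachable v s := by
  have key : ∀ {u v}, (G.subgraph A').Adj u v →
      (G.subgraph A).Reachable u s → (G.subgraph A).Reachable v s := by
    intro u v huv hu
    by_contra hv
    have hvt := ((hA.2 v).resolve_left hv).mono (subgraph_mono hAA')
    exact hA' ((hu.mono (subgraph_mono hAA')).symm.trans (huv.reachable.trans hvt))
  exact ⟨key huv, key huv.symm⟩

-- Every edge of `G` survives in `{e}ᶜ` or in `{f}ᶜ`, so it cannot cross the split of
-- `{e, f}ᶜ`; hence that split would also separate `s` from `t` in `G` itself.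
lemma not_splitState_compl_pair (hG : G.Connected) {e f : G.E} (hef : e ≠ f)
    (he : G.SplitState s t {e}ᶜ) (hf : G.SplitState s t {f}ᶜ) :
    ¬ G.SplitState s t {e, f}ᶜ := by
  intro h
  refine h.1 ((SimpleGraph.Reachable.iff_of_forall_adj
    (P := fun v => (G.subgraph {e, f}ᶜ).Reachable v s) (fun u v huv => ?_)
    (hG.preconnected t s)).mpr (SimpleGraph.Reachable.refl s)).symm
  obtain ⟨-, g, -, hends⟩ := huv
  by_cases hg : g = e
  · exact h.reachable_iff_of_adj (Finset.compl_subset_compl.mpr (by simp)) hf.1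
      (subgraph_adj_of_mem (by simpa [hg] using hef) hends)
  · exact h.reachable_iff_of_adj (Finset.compl_subset_compl.mpr (by simp)) he.1
      (subgraph_adj_of_mem (by simpa using hg) hends)

lemma Nst_eq_zero_of_add_two_lt {i : ℕ} (hi : i + 2 < Fintype.card G.V) : G.Nst s t i = 0 := by
  classical
  rw [Nst, Finset.card_eq_zero, Finset.filter_eq_empty_iff]
  rintro E' - ⟨rfl, h⟩
  exact absurd h.card_le (by omega)

lemma Nst_card_edges_eq_zero (hG : G.Connected) : G.Nst s t (Fintype.card G.E) = 0 := by
  classical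
  rw [Nst, Finset.card_eq_zero, Finset.filter_eq_empty_iff]
  rintro E' - ⟨hcard, h⟩
  exact h.ne_univ hG (Finset.eq_univ_of_card E' hcard)

open scoped Classical in
noncomputable def splitEdges (G : Multigraph) (s t : G.V) : Finset G.E :=
  Finset.univ.filter fun e => G.SplitState s t {e}ᶜ

lemma mem_splitEdges {e : G.E} : e ∈ G.splitEdges s t ↔ G.SplitState s t {e}ᶜ := by
  simp [splitEdges]

lemma Nst_card_sub_one_le (hm : 1 ≤ Fintype.card G.E) :
    G.Nst s t (Fintype.card G.E - 1) ≤ (G.splitEdges s t).card := by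
  classical
  refine Finset.card_le_card_of_surjOn (fun e => {e}ᶜ) fun E' hE' => ?_
  simp only [Finset.coe_filter, Finset.mem_univ, true_and, Set.mem_ofPred_eq] at hE'
  obtain ⟨e, he⟩ := Finset.card_eq_one.mp (by rw [Finset.card_compl]; omega : E'ᶜ.card = 1)
  have hE'e : E' = {e}ᶜ := by rw [← he, compl_compl]
  exact ⟨e, mem_splitEdges.mpr (hE'e ▸ hE'.2), hE'e.symm⟩

lemma Nst_card_sub_two_le (hG : G.Connected) (hm : 2 ≤ Fintype.card G.E) :
    G.Nst s t (Fintype.card G.E - 2) ≤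
      (Fintype.card G.E).choose 2 - (G.splitEdges s t).card.choose 2 := by
  classical
  have hcard : (Finset.univ.powersetCard 2 \ (G.splitEdges s t).powersetCard 2).card =
      (Fintype.card G.E).choose 2 - (G.splitEdges s t).card.choose 2 := by
    rw [Finset.card_sdiff_of_subset (Finset.powersetCard_mono (Finset.subset_univ _)),
      Finset.card_powersetCard, Finset.card_powersetCard, Finset.card_univ]
  rw [← hcard]
  refine Finset.card_le_card_of_injOn (fun E' => E'ᶜ) (fun E' hE' => ?_) compl_injective.injOn
  simp only [Finset.coe_filter, Finset.mem_univ, true_and, Set.mem_ofPred_eq] at hE'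
  have h2 : E'ᶜ.card = 2 := by rw [Finset.card_compl]; omega
  obtain ⟨e, f, hef, hE'ef⟩ := Finset.card_eq_two.mp h2
  refine Finset.mem_sdiff.mpr ⟨Finset.mem_powersetCard.mpr ⟨Finset.subset_univ _, h2⟩,
    fun hsub => ?_⟩
  obtain ⟨he, hf⟩ : e ∈ G.splitEdges s t ∧ f ∈ G.splitEdges s t := by
    simpa [hE'ef, Finset.insert_subset_iff] using (Finset.mem_powersetCard.mp hsub).1
  have hE'eq : E' = {e, f}ᶜ := by rw [← hE'ef, compl_compl]
  exact not_splitState_compl_pair hG hef (mem_splitEdges.mp he) (mem_splitEdges.mp hf)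
    (hE'eq ▸ hE'.2)

lemma Nst_sub_two_le {n : ℕ} (hG : G.Connected) (hn : 2 ≤ n) (hE : Fintype.card G.E = n)
    (h : n - 2 ≤ G.Nst s t (n - 1)) : G.Nst s t (n - 2) ≤ 2 * n - 3 := by
  have h₁ := Nst_card_sub_one_le (s := s) (t := t) (by omega)
  have h₂ := Nst_card_sub_two_le (s := s) (t := t) hG (by omega)
  rw [hE] at h₁ h₂
  have := Nat.choose_le_choose 2 (h.trans h₁)
  have : n.choose 2 = (n - 2).choose 2 + 2 * n - 3 := by
    obtain ⟨k, rfl⟩ : ∃ k, n = k + 2 := ⟨n - 2, by omega⟩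
    have h1 : (k + 2).choose 2 = (k + 1).choose 1 + (k + 1).choose 2 := Nat.choose_succ_succ' _ _
    have h2 : (k + 1).choose 2 = k.choose 1 + k.choose 2 := Nat.choose_succ_succ' _ _
    rw [Nat.choose_one_right] at h1 h2
    rw [Nat.add_sub_cancel]
    omega
  omega

lemma sRel_eq_sum_Nst (p : ℝ) :
    G.sRel s t p = ∑ i ∈ Finset.range (Fintype.card G.E + 1),
      (G.Nst s t i : ℝ) * (p ^ i * (1 - p) ^ (Fintype.card G.E - i)) := by
  classical
  rw [sRel, ← Finset.sum_fiberwise_of_maps_to (g := Finset.card)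
    (t := Finset.range (Fintype.card G.E + 1))
    fun E' _ => Finset.mem_range_succ_iff.mpr (Finset.card_le_univ E')]
  refine Finset.sum_congr rfl fun i _ => ?_
  rw [← Finset.sum_filter, Finset.filter_filter, Nst, ← nsmul_eq_mul, ← Finset.sum_const]
  refine Finset.sum_congr (by congr) fun E' hE' => ?_
  rw [(Finset.mem_filter.mp hE').2.1]

lemma sRel_eq_of_card_eq {n : ℕ} (hG : G.Connected) (hn : 2 ≤ n)
    (hV : Fintype.card G.V = n) (hE : Fintype.card G.E = n) (p : ℝ) :
    G.sRel s t p = G.Nst s t (n - 2) * (p ^ (n - 2) * (1 - p) ^ 2) +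
      G.Nst s t (n - 1) * (p ^ (n - 1) * (1 - p)) := by
  rw [sRel_eq_sum_Nst, hE, Finset.sum_eq_add_of_mem (n - 2) (n - 1) (by simp)
    (by simp) (by omega)]
  · rw [show n - (n - 2) = 2 by omega, show n - (n - 1) = 1 by omega, pow_one]
  · intro i hi hne
    have : G.Nst s t i = 0 := by
      rcases Nat.lt_or_ge (i + 2) n with hlt | hge
      · exact Nst_eq_zero_of_add_two_lt (hV ▸ hlt)
      · rw [show i = Fintype.card G.E by simp at hi; omega]
        exact Nst_card_edges_eq_zero hG
    rw [this, Nat.cast_zero, zero_mul]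

lemma exists_sRel_lt_of_Nst_lt {n : ℕ} (hn : 2 ≤ n) {H : Multigraph} {s' t' : H.V}
    (hG : G.Connected) (hV : Fintype.card G.V = n) (hE : Fintype.card G.E = n)
    (hH : H.Connected) (hV' : Fintype.card H.V = n) (hE' : Fintype.card H.E = n)
    (h : G.Nst s t (n - 2) < H.Nst s' t' (n - 2) ∨ G.Nst s t (n - 1) < H.Nst s' t' (n - 1)) :
    ∃ p : ℝ, 0 < p ∧ p < 1 ∧ G.sRel s t p < H.sRel s' t' p := by
  simp only [sRel_eq_of_card_eq hG hn hV hE, sRel_eq_of_card_eq hH hn hV' hE']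
  exact exists_lt_of_lt_or_lt hn (by exact_mod_cast h)

section Gnm

variable {n : ℕ}

lemma gnm_ends_of_val_succ (hn : 2 ≤ n) {i j : Fin n} (hij : i.val + 1 = j.val) :
    (Gnm n n 0 (by omega)).ends i = s(i, j) := by
  simp only [Gnm, dif_pos (show i.val < n - 1 by omega)]
  congr

lemma gnm_ends_val (hn : 2 ≤ n) {e u v : Fin n} (h : (Gnm n n 0 (by omega)).ends e = s(u, v)) :
    e.val + 1 < n ∧ (u.val = e.val ∧ v.val = e.val + 1 ∨ u.val = e.val + 1 ∧ v.val = e.val) ∨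
      e.val + 1 = n ∧ (u.val = 0 ∧ v.val = 1 ∨ u.val = 1 ∧ v.val = 0) := by
  simp only [Gnm] at h
  split_ifs at h <;> rw [eq_comm, Sym2.eq_iff] at h <;> simp only [Fin.ext_iff] at h <;> omega

lemma gnm_connected (hn : 2 ≤ n) : (Gnm n n 0 (by omega)).Connected :=
  have : NeZero n := ⟨by omega⟩
  SimpleGraph.connected_of_forall_adj_succ fun i _ hij =>
    subgraph_adj_of_mem (Finset.mem_univ i) (gnm_ends_of_val_succ hn hij)

lemma gnm_splitState (hn : 2 ≤ n) {j : Fin n} (hj : 1 ≤ j.val) (hj' : j.val + 2 ≤ n) :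
    (Gnm n n 0 (by omega)).SplitState ⟨0, by omega⟩ ⟨n - 1, by omega⟩
      ({j}ᶜ : Finset (Fin n)) := by
  have hadj : ∀ i k : Fin n, i ≠ j → i.val + 1 = k.val →
      ((Gnm n n 0 (by omega)).subgraph ({j}ᶜ : Finset (Fin n))).Adj i k := fun i k hij hik =>
    subgraph_adj_of_mem (Finset.mem_compl.mpr (Finset.notMem_singleton.mpr hij))
      (gnm_ends_of_val_succ hn hik)
  refine splitState_of_cut (fun v : Fin n => v.val ≤ j.val)
    (fun (e : Fin n) he (u v : Fin n) h => ?_) (by simp) (by simp; omega) fun (v : Fin n) => ?_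
  · have := gnm_ends_val hn h
    have : e ≠ j := Finset.notMem_singleton.mp (Finset.mem_compl.mp he)
    omega
  · by_cases hv : v.val ≤ j.val
    · exact .inl (SimpleGraph.reachable_of_forall_adj_succ (by simp [Fin.le_iff_val_le_val])
        fun i k _ hk hik => hadj i k (by omega) hik).symm
    · exact .inr (SimpleGraph.reachable_of_forall_adj_succ
        (Fin.le_iff_val_le_val.mpr (by simp; omega)) fun i k hi _ hik => hadj i k (by omega) hik)

lemma gnm_le_Nst (hn : 2 ≤ n) :
    n - 2 ≤ (Gnm n n 0 (by omega)).Nst ⟨0, by omega⟩ ⟨n - 1, by omega⟩ (n - 1) := by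
  classical
  have hcard : (Finset.Icc (⟨1, by omega⟩ : Fin n) ⟨n - 2, by omega⟩).card = n - 2 := by
    simp only [Fin.card_Icc]
    omega
  rw [← hcard]
  refine Finset.card_le_card_of_injOn (fun j : Fin n => ({j}ᶜ : Finset (Fin n)))
    (fun j hj => ?_) fun a _ b _ hab => ?_
  · simp only [Finset.coe_Icc, Set.mem_Icc, Fin.le_iff_val_le_val] at hj
    simp only [Finset.coe_filter, Finset.mem_univ, true_and]
    refine ⟨?_, gnm_splitState hn hj.1 (by omega)⟩
    exact (Finset.card_compl _).trans
      (congrArg₂ (· - ·) (Fintype.card_fin n) (Finset.card_singleton j))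
  · exact Finset.singleton_injective (compl_injective hab)

end Gnm

section triGraph

variable {n : ℕ}

lemma triGraph_ends_of_val_succ (hn : 4 ≤ n) {i j : Fin n} (hij : i.val + 1 = j.val) :
    (triGraph n hn).ends i = s(i, j) := by
  simp only [triGraph]
  split_ifs <;> rw [Sym2.eq_iff] <;> simp only [Fin.ext_iff, true_and] <;> omega

lemma triGraph_ends_last (hn : 4 ≤ n) :
    (triGraph n hn).ends ⟨n - 1, by omega⟩ = s(⟨n - 1, by omega⟩, ⟨n - 3, by omega⟩) := by
  simp only [triGraph]
  split_ifs <;> first | omega | rfl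

lemma triGraph_ends_val (hn : 4 ≤ n) {e u v : Fin n} (h : (triGraph n hn).ends e = s(u, v)) :
    e.val + 1 < n ∧ (u.val = e.val ∧ v.val = e.val + 1 ∨ u.val = e.val + 1 ∧ v.val = e.val) ∨
      e.val + 1 = n ∧ (u.val = n - 1 ∧ v.val = n - 3 ∨ u.val = n - 3 ∧ v.val = n - 1) := by
  simp only [triGraph] at h
  split_ifs at h <;> rw [eq_comm, Sym2.eq_iff] at h <;> simp only [Fin.ext_iff] at h <;> omega

lemma triGraph_connected (hn : 4 ≤ n) : (triGraph n hn).Connected :=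
  have : NeZero n := ⟨by omega⟩
  SimpleGraph.connected_of_forall_adj_succ fun i _ hij =>
    subgraph_adj_of_mem (Finset.mem_univ i) (triGraph_ends_of_val_succ hn hij)

lemma triGraph_reachable (hn : 4 ≤ n) {E' : Finset (Fin n)} {u v : Fin n} (huv : u ≤ v)
    (h : ∀ i : Fin n, u ≤ i → i < v → i ∈ E') : ((triGraph n hn).subgraph E').Reachable u v :=
  SimpleGraph.reachable_of_forall_adj_succ huv fun i _ hi hj hij =>
    subgraph_adj_of_mem (h i hi (by omega)) (triGraph_ends_of_val_succ hn hij)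

lemma triGraph_reachable_last (hn : 4 ≤ n) {E' : Finset (Fin n)}
    (h : (⟨n - 1, by omega⟩ : Fin n) ∈ E') :
    ((triGraph n hn).subgraph E').Reachable ⟨n - 1, by omega⟩ ⟨n - 3, by omega⟩ :=
  (subgraph_adj_of_mem h (triGraph_ends_last hn)).reachable

lemma triGraph_splitState_of_isolated (hn : 4 ≤ n) {a b : Fin n} (ha : a.val + 3 = n)
    (hb : b.val + 2 = n) :
    (triGraph n hn).SplitState ⟨0, by omega⟩ ⟨n - 2, by omega⟩ ({a, b}ᶜ : Finset (Fin n)) := by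
  set v₀ : Fin n := ⟨0, by omega⟩
  set v₂ : Fin n := ⟨n - 2, by omega⟩
  set v₃ : Fin n := ⟨n - 1, by omega⟩
  have hv : v₀.val = 0 ∧ v₂.val = n - 2 ∧ v₃.val = n - 1 := ⟨rfl, rfl, rfl⟩
  have hmem : ∀ i : Fin n, i ∈ ({a, b}ᶜ : Finset (Fin n)) ↔ i ≠ a ∧ i ≠ b := by simp
  have hleft : ∀ w : Fin n, w.val ≤ n - 3 →
      ((triGraph n hn).subgraph {a, b}ᶜ).Reachable w v₀ := fun w hw =>
    (triGraph_reachable hn (by omega) fun i _ _ => (hmem i).mpr (by omega)).symm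
  refine splitState_of_cut (fun v : Fin n => v ≠ v₂)
    (fun (e : Fin n) he (u v : Fin n) h => ?_) (by omega) (by simp) fun (v : Fin n) => ?_
  · have := triGraph_ends_val hn h
    have := (hmem e).mp he
    omega
  by_cases hvt : v = v₂
  · exact .inr (hvt ▸ .rfl)
  by_cases hv' : v.val ≤ n - 3
  · exact .inl (hleft v hv')
  obtain rfl : v = v₃ := by omega
  exact .inl ((triGraph_reachable_last hn ((hmem _).mpr (by omega))).trans (hleft _ le_rfl))

lemma triGraph_splitState_of_lt (hn : 4 ≤ n) {a b : Fin n} (hab : a < b) (ha : a.val + 3 ≤ n)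
    (hb : n ≤ b.val + 3) (hab' : a.val + 3 < n ∨ b.val + 1 = n) :
    (triGraph n hn).SplitState ⟨0, by omega⟩ ⟨n - 2, by omega⟩ ({a, b}ᶜ : Finset (Fin n)) := by
  set A := (triGraph n hn).subgraph ({a, b}ᶜ : Finset (Fin n))
  set v₀ : Fin n := ⟨0, by omega⟩
  set v₁ : Fin n := ⟨n - 3, by omega⟩
  set v₂ : Fin n := ⟨n - 2, by omega⟩
  set v₃ : Fin n := ⟨n - 1, by omega⟩
  have hv : v₀.val = 0 ∧ v₁.val = n - 3 ∧ v₂.val = n - 2 ∧ v₃.val = n - 1 := ⟨rfl, rfl, rfl, rfl⟩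
  have hmem : ∀ i : Fin n, i ∈ ({a, b}ᶜ : Finset (Fin n)) ↔ i ≠ a ∧ i ≠ b := by simp
  have hpath : ∀ u v : Fin n, u ≤ v → (∀ i : Fin n, u ≤ i → i < v → i ≠ a ∧ i ≠ b) →
      A.Reachable u v := fun u v huv h =>
    triGraph_reachable hn huv fun i hu hv => (hmem i).mpr (h i hu hv)
  have hlast : b ≠ v₃ → A.Reachable v₃ v₁ := fun hb' =>
    triGraph_reachable_last hn ((hmem _).mpr ⟨by omega, hb'.symm⟩)
  have h₁ : a < v₁ → A.Reachable v₁ v₂ := fun ha' => by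
    by_cases hb₁ : b = v₁
    · exact (hlast (by omega)).symm.trans (hpath v₂ v₃ (by omega) fun i _ _ => by omega).symm
    · exact hpath v₁ v₂ (by omega) fun i _ _ => by omega
  have h₃ : A.Reachable v₃ v₂ := by
    by_cases hb₂ : b = v₂
    · exact (hlast (by omega)).trans (h₁ (by omega))
    · exact (hpath v₂ v₃ (by omega) fun i _ _ => by omega).symm
  refine splitState_of_cut (fun v : Fin n => v ≤ a)
    (fun (e : Fin n) he (u v : Fin n) h => ?_) (by omega) (by simp; omega) fun (v : Fin n) => ?_
  · have := triGraph_ends_val hn h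
    have := (hmem e).mp he
    omega
  by_cases hva : v ≤ a
  · exact .inl (hpath v₀ v (by omega) fun i _ _ => by omega).symm
  right
  by_cases hv₁ : v ≤ v₁
  · exact (hpath v v₁ hv₁ fun i _ _ => by omega).trans (h₁ (by omega))
  by_cases hv₂ : v = v₂
  · exact hv₂ ▸ .rfl
  obtain rfl : v = v₃ := by omega
  exact h₃

lemma triGraph_splitState (hn : 4 ≤ n) {a b : Fin n} (hab : a < b) (ha : a.val + 3 ≤ n)
    (hb : n ≤ b.val + 3) :
    (triGraph n hn).SplitState ⟨0, by omega⟩ ⟨n - 2, by omega⟩ ({a, b}ᶜ : Finset (Fin n)) := by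
  by_cases hiso : a.val + 3 = n ∧ b.val + 2 = n
  · exact triGraph_splitState_of_isolated hn hiso.1 hiso.2
  · exact triGraph_splitState_of_lt hn hab ha hb (by omega)

lemma triGraph_le_Nst (hn : 4 ≤ n) :
    3 * n - 7 ≤ (triGraph n hn).Nst ⟨0, by omega⟩ ⟨n - 2, by omega⟩ (n - 2) := by
  classical
  set c : Fin n := ⟨n - 3, by omega⟩
  have hc : c.val = n - 3 := rfl
  -- the pairs `a < b` with `a ≤ n - 3 ≤ b`, which number `3n - 7`
  set I := Finset.Iic c ×ˢ Finset.Ioi c ∪ Finset.Iio c ×ˢ {c}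
  have hI : ∀ p ∈ I, p.1 < p.2 ∧ p.1.val + 3 ≤ n ∧ n ≤ p.2.val + 3 := by
    intro p hp
    simp only [I, Finset.mem_union, Finset.mem_product, Finset.mem_Iic, Finset.mem_Ioi,
      Finset.mem_Iio, Finset.mem_singleton] at hp
    omega
  have hcard : I.card = 3 * n - 7 := by
    rw [Finset.card_union_of_disjoint, Finset.card_product, Finset.card_product, Fin.card_Iic,
      Fin.card_Ioi, Fin.card_Iio, Finset.card_singleton, hc, show n - 1 - (n - 3) = 2 by omega]
    · omega
    · simp only [Finset.disjoint_left, Finset.mem_product, Finset.mem_Ioi, Finset.mem_singleton]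
      omega
  rw [← hcard]
  refine Finset.card_le_card_of_injOn (fun p => ({p.1, p.2}ᶜ : Finset (Fin n)))
    (fun p hp => ?_) fun p hp q hq hpq => ?_
  · obtain ⟨hlt, h₁, h₂⟩ := hI p hp
    simp only [Finset.coe_filter, Finset.mem_univ, true_and]
    refine ⟨(Finset.card_compl _).trans
      (congrArg₂ (· - ·) (Fintype.card_fin n) (Finset.card_pair hlt.ne)),
      triGraph_splitState hn hlt h₁ h₂⟩
  · have hpq' : ({p.1, p.2} : Set (Fin n)) = {q.1, q.2} := by
      simpa using congrArg (fun F : Finset (Fin n) => (F : Set (Fin n))) (compl_injective hpq)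
    rcases Set.pair_eq_pair_iff.mp hpq' with ⟨h₁, h₂⟩ | ⟨h₁, h₂⟩
    · exact Prod.ext h₁ h₂
    · have := (hI p hp).1
      have := (hI q hq).1
      omega

end triGraph

end Multigraph

theorem no_optimal_of_eq_of_five_le_general (n : ℕ) (hn : 5 ≤ n)
    (G : Multigraph) (s t : G.V) (hG : G.Connected)
    (hV : Fintype.card G.V = n) (hE : Fintype.card G.E = n) :
    ∃ (H : Multigraph) (s' t' : H.V), H.Connected ∧ Fintype.card H.V = n ∧
      Fintype.card H.E = n ∧ s' ≠ t' ∧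
      ∃ p : ℝ, 0 < p ∧ p < 1 ∧ G.sRel s t p < H.sRel s' t' p := by
  by_cases hB : G.Nst s t (n - 1) < n - 2
  · have hH := Multigraph.gnm_connected (n := n) (by omega)
    refine ⟨Multigraph.Gnm n n 0 (by omega), ⟨0, by omega⟩, ⟨n - 1, by omega⟩, hH,
      Fintype.card_fin n, Fintype.card_fin n, Fin.ne_of_val_ne (show 0 ≠ n - 1 by omega), ?_⟩
    exact Multigraph.exists_sRel_lt_of_Nst_lt (by omega) hG hV hE hH (Fintype.card_fin n)
      (Fintype.card_fin n) (.inr (hB.trans_le (Multigraph.gnm_le_Nst (by omega))))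
  · have hH := Multigraph.triGraph_connected (n := n) (by omega)
    have hA := Multigraph.Nst_sub_two_le hG (by omega) hE (not_lt.mp hB)
    have hA' := Multigraph.triGraph_le_Nst (n := n) (by omega)
    refine ⟨Multigraph.triGraph n (by omega), ⟨0, by omega⟩, ⟨n - 2, by omega⟩, hH,
      Fintype.card_fin n, Fintype.card_fin n, Fin.ne_of_val_ne (show 0 ≠ n - 2 by omega), ?_⟩
    exact Multigraph.exists_sRel_lt_of_Nst_lt (by omega) hG hV hE hH (Fintype.card_fin n)
      (Fintype.card_fin n) (.inl (by omega))

/-- If `n = m ≥ 5`, then there is no optimal `(n,n)`-graph: for every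
connected `(n,n)`-multigraph `G` with distinct terminals `s, t` there is a connected
`(n,n)`-multigraph `H` with distinct terminals `s', t'` and some `p ∈ (0,1)` with
`sRel(H,s',t';p) > sRel(G,s,t;p)`. -/
theorem no_optimal_of_eq_of_five_le (n : ℕ) (hn : 5 ≤ n)
    (G : Multigraph) (s t : G.V) (hG : G.Connected)
    (hV : Fintype.card G.V = n) (hE : Fintype.card G.E = n) (hst : s ≠ t) :
    ∃ (H : Multigraph) (s' t' : H.V), H.Connected ∧ Fintype.card H.V = n ∧
      Fintype.card H.E = n ∧ s' ≠ t' ∧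
      ∃ p : ℝ, 0 < p ∧ p < 1 ∧ G.sRel s t p < H.sRel s' t' p :=
  no_optimal_of_eq_of_five_le_general n hn G s t hG hV hE
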